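/- arXiv:2312.06581 — 3 statements merged into one kernel-verified Lean document; each statement's English description precedes it below -/
import Mathlib

section
/- Let G be a group and H a subgroup of G such that for every g ∈ G with g ∉ H, the double coset H*{g}*H equals the set-complement of H in G. Fix g₀ ∈ G and let K be the conjugate subgroup g₀⁻¹Hg₀ = {g₀⁻¹*h*g₀ : h ∈ H}. Then: (a) H*{g₀} = {g₀}*K; (b) for every x ∈ G with x ∈ H*{g₀}, the double coset H*{x}*K equals H*{g₀}; and (c) for every x ∈ G with x ∉ H*{g₀}, the double coset H*{x}*K equals the set-complement of H*{g₀} in G. -/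
open Pointwise

/-- If every double coset `H g H` with `g ∉ H` equals the complement of `H`,
then for the conjugate subgroup `K = g₀⁻¹ H g₀`:
(a) `H g₀ = g₀ K`; (b) for `x ∈ H g₀`, `H x K = H g₀`; (c) for `x ∉ H g₀`,
`H x K = (H g₀)ᶜ`. -/
theorem coset_circuit_double_coset_structure {G : Type*} [Group G] (H : Subgroup G)
    (hH : ∀ g : G, g ∉ H → (H : Set G) * {g} * (H : Set G) = (H : Set G)ᶜ)
    (g₀ : G) (K : Set G) (hK : K = {g₀⁻¹} * (H : Set G) * {g₀}) :
    ((H : Set G) * {g₀} = {g₀} * K) ∧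
    (∀ x ∈ (H : Set G) * {g₀}, (H : Set G) * {x} * K = (H : Set G) * {g₀}) ∧
    (∀ x ∉ (H : Set G) * {g₀}, (H : Set G) * {x} * K = ((H : Set G) * {g₀})ᶜ) := by
  subst hK
  have hmem : ∀ (S : Set G) (g x : G), x ∈ S * {g} ↔ x * g⁻¹ ∈ S := by
    intro S g x
    rw [Set.mul_singleton, Set.mem_image]
    constructor
    · rintro ⟨a, ha, rfl⟩; simpa using ha
    · intro h; exact ⟨x * g⁻¹, h, by group⟩
  have hcoset : ∀ h : G, h ∈ H → (H : Set G) * {h} = H := by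
    intro h hh
    ext y
    rw [hmem]
    exact ⟨fun hy => by simpa using H.mul_mem hy hh,
      fun hy => H.mul_mem hy (H.inv_mem hh)⟩
  have key : ∀ x : G, (H : Set G) * {x} * ({g₀⁻¹} * (H : Set G) * {g₀})
      = (H : Set G) * {x * g₀⁻¹} * (H : Set G) * {g₀} := by
    intro x
    simp only [mul_assoc]
    rw [← mul_assoc ({x} : Set G) {g₀⁻¹}, Set.singleton_mul_singleton]
  refine ⟨?_, ?_, ?_⟩
  · rw [← mul_assoc, ← mul_assoc, Set.singleton_mul_singleton, mul_inv_cancel,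
      Set.singleton_one, one_mul]
  · intro x hx
    rw [key]
    have hxg : x * g₀⁻¹ ∈ H := (hmem _ _ _).1 hx
    rw [hcoset _ hxg]
    have hHH : (H : Set G) * (H : Set G) = H := by
      apply Set.Subset.antisymm
      · rintro y ⟨a, ha, b, hb, rfl⟩; exact H.mul_mem ha hb
      · intro y hy; exact ⟨y, hy, 1, H.one_mem, mul_one y⟩
    rw [hHH]
  · intro x hx
    rw [key]
    have hxg : x * g₀⁻¹ ∉ H := fun h => hx ((hmem _ _ _).2 h)
    rw [hH _ hxg, Set.mul_singleton, Set.mul_singleton,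
      Set.image_compl_eq (Group.mulRight_bijective g₀)]
end

section
/- Let n ≥ 5 and let H be a subgroup of the symmetric group S_n = Equiv.Perm (Fin n) with H ≠ {1} and H ≠ S_n. Suppose that multiplication of left cosets of H is well defined, i.e. for all x, y ∈ S_n there exists z ∈ S_n such that the pointwise product of the left cosets ({x}*H) * ({y}*H) equals the left coset {z}*H. Then H is the alternating group A_n. -/
open Pointwise

open Equiv Equiv.Perm in
private lemma swap_cycleType' {α : Type*} [DecidableEq α] [Fintype α] {a b : α} (h : a ≠ b) :
    (Equiv.swap a b).cycleType = {2} := by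
  have hc : (Equiv.swap a b).IsCycle := isCycle_swap h
  rw [hc.cycleType, support_swap h]
  rw [Finset.card_pair h]

open Equiv Equiv.Perm in
private lemma exists_fresh {n : ℕ} (hn : 5 ≤ n) (s : Finset (Fin n)) (hs : s.card < 5) :
    ∃ e : Fin n, e ∉ s := by
  by_contra h
  push_neg at h
  have : s = Finset.univ := Finset.eq_univ_iff_forall.mpr h
  rw [this, Finset.card_univ, Fintype.card_fin] at hs
  omega

open Equiv Equiv.Perm in
private lemma swap_disjoint' {α : Type*} [DecidableEq α] {a b c d : α}
    (hac : a ≠ c) (had : a ≠ d) (hbc : b ≠ c) (hbd : b ≠ d) :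
    Equiv.Perm.Disjoint (Equiv.swap a b) (Equiv.swap c d) := by
  intro x
  by_cases hx : x = a ∨ x = b
  · right
    rcases hx with rfl | rfl
    · exact Equiv.swap_apply_of_ne_of_ne hac had
    · exact Equiv.swap_apply_of_ne_of_ne hbc hbd
  · left
    push_neg at hx
    exact Equiv.swap_apply_of_ne_of_ne hx.1 hx.2

/-- for `n ≥ 5`, a proper nontrivial subgroup `H` of `S_n` whose left coset
multiplication is well defined must be the alternating group. -/
theorem coset_multiplication_well_defined_iff_alternating (n : ℕ) (hn : 5 ≤ n)
    (H : Subgroup (Equiv.Perm (Fin n))) (hbot : H ≠ ⊥) (htop : H ≠ ⊤)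
    (hmul : ∀ x y : Equiv.Perm (Fin n), ∃ z : Equiv.Perm (Fin n),
      (({x} : Set (Equiv.Perm (Fin n))) * (H : Set (Equiv.Perm (Fin n)))) *
        (({y} : Set (Equiv.Perm (Fin n))) * (H : Set (Equiv.Perm (Fin n)))) =
      ({z} : Set (Equiv.Perm (Fin n))) * (H : Set (Equiv.Perm (Fin n)))) :
    H = alternatingGroup (Fin n) := by
  classical
  -- Step 1: H is normal
  have hnorm : ∀ g : Equiv.Perm (Fin n), ∀ h ∈ H, g * h * g⁻¹ ∈ H := by
    intro g h hh
    obtain ⟨z, hz⟩ := hmul g g⁻¹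
    have mem1 : g * h * g⁻¹ ∈
        (({g} : Set (Equiv.Perm (Fin n))) * (H : Set (Equiv.Perm (Fin n)))) *
          (({g⁻¹} : Set (Equiv.Perm (Fin n))) * (H : Set (Equiv.Perm (Fin n)))) := by
      have h1 : g * h ∈ ({g} : Set (Equiv.Perm (Fin n))) * (H : Set (Equiv.Perm (Fin n))) :=
        Set.mul_mem_mul rfl hh
      have h2 : g⁻¹ ∈ ({g⁻¹} : Set (Equiv.Perm (Fin n))) * (H : Set (Equiv.Perm (Fin n))) := by
        have := Set.mul_mem_mul (Set.mem_singleton g⁻¹) H.one_mem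
        simpa using this
      exact Set.mul_mem_mul h1 h2
    have mem2 : (1 : Equiv.Perm (Fin n)) ∈
        (({g} : Set (Equiv.Perm (Fin n))) * (H : Set (Equiv.Perm (Fin n)))) *
          (({g⁻¹} : Set (Equiv.Perm (Fin n))) * (H : Set (Equiv.Perm (Fin n)))) := by
      have h1 : g ∈ ({g} : Set (Equiv.Perm (Fin n))) * (H : Set (Equiv.Perm (Fin n))) := by
        have := Set.mul_mem_mul (Set.mem_singleton g) H.one_mem
        simpa using this
      have h2 : g⁻¹ ∈ ({g⁻¹} : Set (Equiv.Perm (Fin n))) * (H : Set (Equiv.Perm (Fin n))) := by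
        have := Set.mul_mem_mul (Set.mem_singleton g⁻¹) H.one_mem
        simpa using this
      have := Set.mul_mem_mul h1 h2
      simpa using this
    rw [hz] at mem1 mem2
    obtain ⟨x1, hx1, k1, hk1, he1⟩ := mem1
    obtain ⟨x2, hx2, k2, hk2, he2⟩ := mem2
    rw [Set.mem_singleton_iff] at hx1 hx2
    simp only at he1 he2
    rw [hx1] at he1
    rw [hx2] at he2
    have hzk : z = k2⁻¹ := eq_inv_of_mul_eq_one_left he2
    have : g * h * g⁻¹ = k2⁻¹ * k1 := by rw [← he1, hzk]
    rw [this]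
    exact H.mul_mem (H.inv_mem hk2) hk1
  have hNorm : H.Normal := ⟨fun h hh g => hnorm g h hh⟩
  -- no transposition can be in H, else H = ⊤
  have hswap : ∀ a c : Fin n, a ≠ c → Equiv.swap a c ∈ H → False := by
    intro a c hac hsw
    apply htop
    rw [eq_top_iff, ← Equiv.Perm.closure_isSwap]
    apply (Subgroup.closure_le H).mpr
    rintro σ ⟨x, y, hxy, rfl⟩
    have hconj : IsConj (Equiv.swap a c) (Equiv.swap x y) := by
      rw [Equiv.Perm.isConj_iff_cycleType_eq, swap_cycleType' hac, swap_cycleType' hxy]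
    obtain ⟨g, hg⟩ := isConj_iff.mp hconj
    rw [← hg]
    exact hnorm g _ hsw
  -- a three-cycle in H gives alternatingGroup ≤ H
  have hthree : ∀ t : Equiv.Perm (Fin n), t.IsThreeCycle → t ∈ H →
      alternatingGroup (Fin n) ≤ H := by
    intro t ht htH
    rw [← Equiv.Perm.closure_three_cycles_eq_alternating]
    apply (Subgroup.closure_le H).mpr
    intro g hg
    have hconj : IsConj t g := by
      rw [Equiv.Perm.isConj_iff_cycleType_eq, ht.cycleType, hg.cycleType]
    obtain ⟨k, hk⟩ := isConj_iff.mp hconj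
    rw [← hk]
    exact hnorm k _ htH
  -- Step 2: get a nontrivial σ ∈ H
  obtain ⟨σ, hσH, hσ1⟩ : ∃ σ ∈ H, σ ≠ 1 := by
    by_contra h
    push_neg at h
    exact hbot (Subgroup.eq_bot_iff_forall H |>.mpr h)
  obtain ⟨a, ha⟩ : ∃ a, σ a ≠ a := by
    by_contra h
    push_neg at h
    exact hσ1 (Equiv.ext h)
  set b := σ a with hb
  obtain ⟨c, hc⟩ : ∃ c : Fin n, c ∉ ({a, b} : Finset (Fin n)) := by
    apply exists_fresh hn
    calc ({a, b} : Finset (Fin n)).card ≤ 2 := Finset.card_insert_le _ _ |>.trans (by simp)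
      _ < 5 := by omega
  simp only [Finset.mem_insert, Finset.mem_singleton, not_or] at hc
  obtain ⟨hca', hcb'⟩ := hc
  have hca : c ≠ a := hca'
  have hcb : c ≠ b := hcb' 
  have hab : a ≠ b := fun h => ha h.symm
  -- the commutator π = swap b (σ c) * swap a c ∈ H
  have hπH : Equiv.swap b (σ c) * Equiv.swap a c ∈ H := by
    have h1 : σ * (Equiv.swap a c * σ⁻¹ * (Equiv.swap a c)⁻¹) ∈ H :=
      H.mul_mem hσH (by
        have := hnorm (Equiv.swap a c) σ⁻¹ (H.inv_mem hσH)
        simpa using this)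
    have heq : σ * (Equiv.swap a c * σ⁻¹ * (Equiv.swap a c)⁻¹)
        = Equiv.swap b (σ c) * Equiv.swap a c := by
      rw [hb, Equiv.swap_apply_apply, Equiv.swap_inv]
      group
    rwa [heq] at h1
  -- find a three-cycle in H
  have hAle : alternatingGroup (Fin n) ≤ H := by
    by_cases h1 : σ c = b
    · -- π = swap a c is a transposition in H, contradiction
      exfalso
      apply hswap a c hca.symm
      have : Equiv.swap b (σ c) = 1 := by rw [h1, Equiv.swap_self]; rfl
      rwa [this, one_mul] at hπH
    · by_cases h2 : σ c = c
      · -- π = swap b c * swap a c, a three-cycle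
        refine hthree _ ?_ (by rwa [h2] at hπH)
        have : Equiv.swap b c * Equiv.swap a c = Equiv.swap c b * Equiv.swap c a := by
          rw [Equiv.swap_comm b c, Equiv.swap_comm a c]
        rw [this]
        exact Equiv.Perm.isThreeCycle_swap_mul_swap_same hcb hca (Ne.symm hab)
      · by_cases h3 : σ c = a
        · -- π = swap b a * swap a c, a three-cycle
          refine hthree _ ?_ (by rwa [h3] at hπH)
          rw [Equiv.swap_comm b a]
          exact Equiv.Perm.isThreeCycle_swap_mul_swap_same hab (Ne.symm hca) (Ne.symm hcb)
        · -- a, b, c, d := σ c are four distinct points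
          set d := σ c with hd
          have hdb : d ≠ b := h1
          have hdc : d ≠ c := h2
          have hda : d ≠ a := h3
          obtain ⟨e, he⟩ : ∃ e : Fin n, e ∉ ({a, b, c, d} : Finset (Fin n)) := by
            apply exists_fresh hn
            calc ({a, b, c, d} : Finset (Fin n)).card ≤ 4 := by
                  apply Finset.card_insert_le _ _ |>.trans
                  simp only [Nat.succ_le_succ_iff]
                  apply Finset.card_insert_le _ _ |>.trans
                  simp only [Nat.succ_le_succ_iff]
                  exact Finset.card_insert_le _ _ |>.trans (by simp)
              _ < 5 := by omega
          simp only [Finset.mem_insert, Finset.mem_singleton, not_or] at he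
          obtain ⟨hea, heb, hec, hed⟩ := he
          -- conjugate π by swap c e to get π' = swap b d * swap a e ∈ H
          have hπ' : Equiv.swap b d * Equiv.swap a e ∈ H := by
            have := hnorm (Equiv.swap c e) _ hπH
            have e2 : Equiv.swap c e * Equiv.swap b d * (Equiv.swap c e)⁻¹
                = Equiv.swap b d := by
              rw [← Equiv.swap_apply_apply,
                Equiv.swap_apply_of_ne_of_ne (Ne.symm hcb) (Ne.symm heb),
                Equiv.swap_apply_of_ne_of_ne hdc (Ne.symm hed)]
            have e3 : Equiv.swap c e * Equiv.swap a c * (Equiv.swap c e)⁻¹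
                = Equiv.swap a e := by
              rw [← Equiv.swap_apply_apply,
                Equiv.swap_apply_of_ne_of_ne (Ne.symm hca) (Ne.symm hea),
                Equiv.swap_apply_left]
            have heq : Equiv.swap c e * (Equiv.swap b d * Equiv.swap a c) *
                (Equiv.swap c e)⁻¹ = Equiv.swap b d * Equiv.swap a e := by
              calc Equiv.swap c e * (Equiv.swap b d * Equiv.swap a c) * (Equiv.swap c e)⁻¹
                  = (Equiv.swap c e * Equiv.swap b d * (Equiv.swap c e)⁻¹) *
                    (Equiv.swap c e * Equiv.swap a c * (Equiv.swap c e)⁻¹) := by group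
                _ = Equiv.swap b d * Equiv.swap a e := by rw [e2, e3]
            rwa [heq] at this
          -- π' * π⁻¹ = swap a e * swap a c is a three-cycle in H
          have comm1 : Commute (Equiv.swap b d) (Equiv.swap a c) :=
            (swap_disjoint' hab (Ne.symm hda) hcb (Ne.symm hdc)).symm.commute
          have comm2 : Commute (Equiv.swap b d) (Equiv.swap a e) :=
            (swap_disjoint' hab (Ne.symm hda) heb hed).symm.commute
          have key : (Equiv.swap b d * Equiv.swap a e) * (Equiv.swap b d * Equiv.swap a c)⁻¹
              = Equiv.swap a e * Equiv.swap a c := by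
            rw [mul_inv_rev, Equiv.swap_inv, Equiv.swap_inv]
            have cc : Commute (Equiv.swap b d) (Equiv.swap a e * Equiv.swap a c) :=
              comm2.mul_right comm1
            calc Equiv.swap b d * Equiv.swap a e * (Equiv.swap a c * Equiv.swap b d)
                = Equiv.swap b d * (Equiv.swap a e * Equiv.swap a c) * Equiv.swap b d := by
                  group
              _ = Equiv.swap a e * Equiv.swap a c * Equiv.swap b d * Equiv.swap b d := by
                  rw [cc.eq]
              _ = Equiv.swap a e * Equiv.swap a c := by
                  rw [mul_assoc, Equiv.swap_mul_self, mul_one]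
          refine hthree _ ?_ (key ▸ H.mul_mem hπ' (H.inv_mem hπH))
          exact Equiv.Perm.isThreeCycle_swap_mul_swap_same (Ne.symm hea) (Ne.symm hca) hec
  -- Step 3: A ≤ H and H ≠ ⊤ force H = A
  refine le_antisymm ?_ hAle
  intro τ hτ
  by_contra hτA
  apply htop
  rw [eq_top_iff]
  intro g _
  by_cases hg : g ∈ alternatingGroup (Fin n)
  · exact hAle hg
  · have h1 : Equiv.Perm.sign τ = -1 := by
      rcases Int.units_eq_one_or (Equiv.Perm.sign τ) with h | h
      · exact absurd (Equiv.Perm.mem_alternatingGroup.mpr h) hτA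
      · exact h
    have h2 : Equiv.Perm.sign g = -1 := by
      rcases Int.units_eq_one_or (Equiv.Perm.sign g) with h | h
      · exact absurd (Equiv.Perm.mem_alternatingGroup.mpr h) hg
      · exact h
    have h3 : τ⁻¹ * g ∈ alternatingGroup (Fin n) := by
      rw [Equiv.Perm.mem_alternatingGroup, map_mul, map_inv, h1, h2]
      rfl
    have := H.mul_mem hτ (hAle h3)
    rwa [← mul_assoc, mul_inv_cancel, one_mul] at this
end

section
/- Let α be a type with decidable equality, let G = Equiv.Perm α, and for a ∈ α let Stab(a) = {σ ∈ G : σ a = a} be the stabilizer subgroup of a. Fix i, j ∈ α. Then: (a) for every g ∈ G with g j = i, the double coset Stab(i)*{g}*Stab(j) equals {σ ∈ G : σ j = i}, and moreover the right coset Stab(i)*{g} equals the left coset {g}*Stab(j); and (b) for every x ∈ G with x j ≠ i, the double coset Stab(i)*{x}*Stab(j) equals {σ ∈ G : σ j ≠ i}. In particular, G decomposes into exactly two (Stab(i), Stab(j))-double cosets. -/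
/-!
A permutation `σ` lies in the double coset `Stab(i) g Stab(j)` exactly when `σ j` lies in the
`Stab(i)`-orbit of `g j`, since right multiplication by `Stab(j)` does not move the image of `j`.
Under `Stab(i)` the point `i` is fixed, while every other point can be moved to any point
`≠ i` by a transposition avoiding `i`; so there are exactly the two double cosets
`{σ | σ j = i}` and `{σ | σ j ≠ i}`.
-/

open Pointwise MulAction

section

variable {G α : Type*} [Group G] [MulAction G α]

theorem MulAction.subgroup_mul_singleton_mul_stabilizer (H : Subgroup G) (g : G) (j : α) :
    (H : Set G) * {g} * (stabilizer G j : Set G) = {σ | σ • j ∈ orbit H (g • j)} := by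
  ext σ
  simp only [Set.mem_mul, Set.mem_singleton_iff, Set.mem_ofPred_eq, mem_orbit_iff,
    Subgroup.smul_def, Subtype.exists, exists_prop, SetLike.mem_coe, mem_stabilizer_iff]
  constructor
  · rintro ⟨_, ⟨h, hh, _, rfl, rfl⟩, k, hk, rfl⟩
    exact ⟨h, hh, by rw [mul_smul, hk, mul_smul]⟩
  · rintro ⟨h, hh, hσ⟩
    refine ⟨h * g, ⟨h, hh, g, rfl, rfl⟩, (h * g)⁻¹ * σ, ?_, mul_inv_cancel_left _ _⟩
    rw [mul_smul, ← hσ, ← mul_smul h, inv_smul_smul]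

theorem MulAction.orbit_stabilizer_self (a : α) : orbit (stabilizer G a) a = {a} :=
  Set.eq_singleton_iff_unique_mem.mpr ⟨mem_orbit_self a, fun _ ⟨h, hb⟩ => hb ▸ h.2⟩

theorem MulAction.stabilizer_smul_mul_singleton (g : G) (j : α) :
    (stabilizer G (g • j) : Set G) * {g} = {g} * stabilizer G j := by
  ext σ
  simp only [Set.mul_singleton, Set.singleton_mul, Set.mem_image, SetLike.mem_coe,
    mem_stabilizer_iff]
  constructor
  · rintro ⟨h, hh, rfl⟩
    exact ⟨g⁻¹ * h * g, by rw [mul_smul, mul_smul, hh, inv_smul_smul], by group⟩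
  · rintro ⟨k, hk, rfl⟩
    exact ⟨g * k * g⁻¹, by rw [mul_smul, mul_smul, inv_smul_smul, hk], by group⟩

end

theorem Equiv.Perm.orbit_stabilizer_of_ne {α : Type*} [DecidableEq α] {a b : α} (hb : b ≠ a) :
    orbit (stabilizer (Perm α) a) b = {a}ᶜ := by
  ext c
  simp only [mem_orbit_iff, Subtype.exists, mem_stabilizer_iff, Subgroup.mk_smul,
    Set.mem_compl_singleton_iff]
  constructor
  · rintro ⟨h, hh, rfl⟩
    exact fun hc => hb (h.injective (hc.trans hh.symm))
  · intro hc
    exact ⟨swap b c, swap_apply_of_ne_of_ne hb.symm hc.symm, swap_apply_left b c⟩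

/-- for stabilizers `Stab(i)`, `Stab(j)` in `Equiv.Perm α`:
(a) for `g` with `g j = i`, the double coset `Stab(i) g Stab(j)` is `{σ | σ j = i}` and
`Stab(i) g = g Stab(j)`; (b) for `x` with `x j ≠ i`, the double coset `Stab(i) x Stab(j)`
is `{σ | σ j ≠ i}`. -/
theorem stabilizer_double_cosets {α : Type*} [DecidableEq α] (i j : α) :
    (∀ g : Equiv.Perm α, g j = i →
      ({σ : Equiv.Perm α | σ i = i} * {g} * {σ : Equiv.Perm α | σ j = j}
          = {σ : Equiv.Perm α | σ j = i}) ∧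
      ({σ : Equiv.Perm α | σ i = i} * {g} = {g} * {σ : Equiv.Perm α | σ j = j})) ∧
    (∀ x : Equiv.Perm α, x j ≠ i →
      {σ : Equiv.Perm α | σ i = i} * {x} * {σ : Equiv.Perm α | σ j = j}
          = {σ : Equiv.Perm α | σ j ≠ i}) := by
  have hstab (a : α) : {σ : Equiv.Perm α | σ a = a} = stabilizer (Equiv.Perm α) a := rfl
  simp only [hstab, subgroup_mul_singleton_mul_stabilizer]
  refine ⟨fun g hg => ?_, fun x hx => ?_⟩
  · subst hg
    refine ⟨?_, stabilizer_smul_mul_singleton g j⟩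
    rw [← Equiv.Perm.smul_def, orbit_stabilizer_self]
    rfl
  · rw [Equiv.Perm.smul_def, Equiv.Perm.orbit_stabilizer_of_ne hx]
    rfl
end
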